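/- (Invariance of the Stiefel manifold for the PCA flow.) Let n ≥ 1, let A ∈ ℝ^{n×n} be symmetric, and let W : [0,∞) → ℝ^{n×n} be differentiable with W′(t) = G(A, W(t)) for all t ≥ 0 and W(0)ᵀ W(0) = I. Then W(t)ᵀ W(t) = I for all t ≥ 0, i.e. W(t) remains in the orthogonal group O(n) for all time. -/

import Mathlib

open Matrix

/-- `Σ(Λ,Q)`: entrywise, `(QᵀΛQ)_{jk}` for `j > k`, `−(QᵀΛQ)_{jk}` for `j < k`, `0` on the
diagonal. -/
noncomputable def sigmaMat {n : ℕ} (Λ Q : Matrix (Fin n) (Fin n) ℝ) :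
    Matrix (Fin n) (Fin n) ℝ :=
  Matrix.of fun j k =>
    if (k : ℕ) < (j : ℕ) then (Qᵀ * Λ * Q) j k
    else if (j : ℕ) < (k : ℕ) then -((Qᵀ * Λ * Q) j k)
    else 0

/-- Frobenius norm of a matrix. -/
noncomputable def frobNorm {n : ℕ} (A : Matrix (Fin n) (Fin n) ℝ) : ℝ :=
  Real.sqrt (∑ i, ∑ j, (A i j) ^ 2)

/-- Euclidean (`ℓ²`) norm on `ℝⁿ`. -/
noncomputable def euclNorm {n : ℕ} (x : Fin n → ℝ) : ℝ :=
  Real.sqrt (∑ i, (x i) ^ 2)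

/-- The rank-one matrix `xxᵀ`. -/
def outer {n : ℕ} (x : Fin n → ℝ) : Matrix (Fin n) (Fin n) ℝ :=
  Matrix.of fun i j => x i * x j

/-- `G(Λ,Q) := ΛQ − QQᵀΛQ + QΣ(Λ,Q)`. -/
noncomputable def Gmat {n : ℕ} (Λ Q : Matrix (Fin n) (Fin n) ℝ) :
    Matrix (Fin n) (Fin n) ℝ :=
  Λ * Q - Q * Qᵀ * Λ * Q + Q * sigmaMat Λ Q

attribute [local instance] Matrix.frobeniusNormedAddCommGroup Matrix.frobeniusNormedSpace

/-!
With `Y = WᵀW - 1`, the definition of `G` is designed so that `Y` satisfies the linear equation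
`Y' = -(MY + YM + ΣY - YΣ)` with `M = WᵀAW`, the antisymmetry of `Σ` (for symmetric `A`) making
the `Σ`-terms a commutator. The coefficients are bounded on compact time intervals, so Grönwall's
inequality forces `Y ≡ 0` from `Y(0) = 0`.
-/

attribute [local instance] Matrix.frobeniusNormedRing Matrix.frobeniusNormedAlgebra

theorem HasDerivAt.matrix_transpose_mul_self {m : Type*} [Fintype m] [DecidableEq m]
    {W : ℝ → Matrix m m ℝ} {W' : Matrix m m ℝ} {t : ℝ} (h : HasDerivAt W W' t) :
    HasDerivAt (fun s => (W s)ᵀ * W s) (W'ᵀ * W t + (W t)ᵀ * W') t := by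
  have hT : HasDerivAt (fun s => (W s)ᵀ) W'ᵀ t := by
    have h' := h.star
    simp only [star_eq_conjTranspose, conjTranspose_eq_transpose_of_trivial] at h'
    exact h'
  exact hT.mul h

theorem Matrix.frobenius_norm_le_of_forall_norm_le {m n α : Type*} [Fintype m] [Fintype n]
    [NormedAddCommGroup α] {A B : Matrix m n α} (h : ∀ i j, ‖A i j‖ ≤ ‖B i j‖) :
    ‖A‖ ≤ ‖B‖ := by
  rw [frobenius_norm_def, frobenius_norm_def]
  gcongr with i _ j _
  exact h i j

theorem norm_mul_add_mul_add_commutator_le {R : Type*} [NormedRing R] (M S Y : R) :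
    ‖M * Y + Y * M + (S * Y - Y * S)‖ ≤ 2 * (‖M‖ + ‖S‖) * ‖Y‖ :=
  calc ‖M * Y + Y * M + (S * Y - Y * S)‖
      ≤ ‖M * Y‖ + ‖Y * M‖ + (‖S * Y‖ + ‖Y * S‖) :=
        norm_add₃_le.trans (by gcongr; exact norm_sub_le _ _)
    _ ≤ ‖M‖ * ‖Y‖ + ‖Y‖ * ‖M‖ + (‖S‖ * ‖Y‖ + ‖Y‖ * ‖S‖) := by
        gcongr <;> exact norm_mul_le _ _
    _ = 2 * (‖M‖ + ‖S‖) * ‖Y‖ := by ring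

theorem Matrix.norm_transpose_mul_mul_le {m k : Type*} [Fintype m] [Fintype k]
    (A : Matrix m m ℝ) (Q : Matrix m k ℝ) : ‖Qᵀ * A * Q‖ ≤ ‖A‖ * ‖Q‖ ^ 2 :=
  calc ‖Qᵀ * A * Q‖ ≤ ‖Qᵀ‖ * ‖A‖ * ‖Q‖ :=
        (frobenius_norm_mul _ _).trans (by gcongr; exact frobenius_norm_mul _ _)
    _ = ‖A‖ * ‖Q‖ ^ 2 := by rw [frobenius_norm_transpose]; ring

section PCAFlow

variable {n : ℕ} {A : Matrix (Fin n) (Fin n) ℝ}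

theorem sigmaMat_transpose (hA : Aᵀ = A) (Q : Matrix (Fin n) (Fin n) ℝ) :
    (sigmaMat A Q)ᵀ = -sigmaMat A Q := by
  have hsymm : (Qᵀ * A * Q)ᵀ = Qᵀ * A * Q := by
    simp only [transpose_mul, transpose_transpose, hA, Matrix.mul_assoc]
  have hM : ∀ j k, (Qᵀ * A * Q) k j = (Qᵀ * A * Q) j k := fun j k => congr_fun₂ hsymm j k
  ext j k
  simp only [transpose_apply, sigmaMat, of_apply, Fin.val_fin_lt]
  rcases lt_trichotomy j k with h | rfl | h
  · simp [h, h.not_gt, hM]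
  · simp
  · simp [h, h.not_gt, hM]

theorem norm_sigmaMat_le (Q : Matrix (Fin n) (Fin n) ℝ) : ‖sigmaMat A Q‖ ≤ ‖Qᵀ * A * Q‖ := by
  refine frobenius_norm_le_of_forall_norm_le fun j k => ?_
  simp only [sigmaMat, of_apply]
  split_ifs <;> simp

theorem transpose_Gmat_mul_add_transpose_mul_Gmat (hA : Aᵀ = A) (Q : Matrix (Fin n) (Fin n) ℝ) :
    (Gmat A Q)ᵀ * Q + Qᵀ * Gmat A Q =
      -(Qᵀ * A * Q * (Qᵀ * Q - 1) + (Qᵀ * Q - 1) * (Qᵀ * A * Q) +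
        (sigmaMat A Q * (Qᵀ * Q - 1) - (Qᵀ * Q - 1) * sigmaMat A Q)) := by
  simp only [Gmat, transpose_add, transpose_sub, transpose_mul, transpose_transpose, hA,
    sigmaMat_transpose hA Q]
  noncomm_ring

theorem norm_transpose_Gmat_mul_add_transpose_mul_Gmat_le (hA : Aᵀ = A)
    (Q : Matrix (Fin n) (Fin n) ℝ) :
    ‖(Gmat A Q)ᵀ * Q + Qᵀ * Gmat A Q‖ ≤ 4 * ‖A‖ * ‖Q‖ ^ 2 * ‖Qᵀ * Q - 1‖ := by
  rw [transpose_Gmat_mul_add_transpose_mul_Gmat hA, norm_neg]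
  have hM := norm_transpose_mul_mul_le A Q
  have hS := (norm_sigmaMat_le (A := A) Q).trans hM
  refine (norm_mul_add_mul_add_commutator_le _ _ _).trans ?_
  have := norm_nonneg (Qᵀ * Q - 1)
  nlinarith

end PCAFlow

theorem stiefel_invariance_pca_flow_general {n : ℕ}
    (A : Matrix (Fin n) (Fin n) ℝ) (hA : Aᵀ = A)
    (W : ℝ → Matrix (Fin n) (Fin n) ℝ)
    (hW : ∀ t : ℝ, 0 ≤ t → HasDerivAt W (Gmat A (W t)) t)
    (hW0 : (W 0)ᵀ * W 0 = 1) :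
    ∀ t : ℝ, 0 ≤ t → (W t)ᵀ * W t = 1 := by
  intro T hT
  have hY : ∀ t, 0 ≤ t → HasDerivAt (fun s => (W s)ᵀ * W s - 1)
      ((Gmat A (W t))ᵀ * W t + (W t)ᵀ * Gmat A (W t)) t := fun t ht =>
    ((hW t ht).matrix_transpose_mul_self).sub_const 1
  obtain ⟨C, hC⟩ := isCompact_Icc.exists_bound_of_continuousOn (f := W) (s := Set.Icc 0 T)
    fun t ht => (hW t ht.1).continuousAt.continuousWithinAt
  have hdefect := eq_zero_of_abs_deriv_le_mul_abs_self_of_eq_zero_right (K := 4 * ‖A‖ * C ^ 2)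
    (fun t ht => (hY t ht.1).continuousAt.continuousWithinAt)
    (fun t ht => (hY t ht.1).hasDerivWithinAt) (sub_eq_zero_of_eq hW0)
    (fun t ht => (norm_transpose_Gmat_mul_add_transpose_mul_Gmat_le hA (W t)).trans (by
      have hWt := hC t (Set.Ico_subset_Icc_self ht)
      gcongr))
    T ⟨hT, le_rfl⟩
  exact sub_eq_zero.mp hdefect

/-- Invariance of the Stiefel manifold (orthogonal group) for the PCA flow `Ẇ = G(A,W)`:
if `W(0)ᵀW(0) = I` then `W(t)ᵀW(t) = I` for all `t ≥ 0`. -/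
theorem stiefel_invariance_pca_flow {n : ℕ} (hn : 1 ≤ n)
    (A : Matrix (Fin n) (Fin n) ℝ) (hA : Aᵀ = A)
    (W : ℝ → Matrix (Fin n) (Fin n) ℝ)
    (hW : ∀ t : ℝ, 0 ≤ t → HasDerivAt W (Gmat A (W t)) t)
    (hW0 : (W 0)ᵀ * W 0 = 1) :
    ∀ t : ℝ, 0 ≤ t → (W t)ᵀ * W t = 1 :=
  stiefel_invariance_pca_flow_general A hA W hW hW0
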